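/- Let A and A′ be real symmetric N×N matrices with nonnegative entries and strictly positive row sums, and let D and D′ be their degree matrices. Let λ_1, …, λ_N be the eigenvalues of S = D^{-1/2} A D^{-1/2} and λ′_1, …, λ′_N the eigenvalues of S′ = (D′)^{-1/2} A′ (D′)^{-1/2} (equivalently, the generalized eigenvalues of the pencils (A, D) and (A′, D′), respectively). Then for every natural number k, the attack objective ℓ₁(A′) = ‖(S′)^k − S^k‖_F² is lower bounded by ℓ₂(λ′) = ( √(Σ_{i=1}^N (λ′_i)^{2k}) − √(Σ_{i=1}^N λ_i^{2k}) )². -/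

import Mathlib

open Matrix

lemma aux_trace {n : Type*} [Fintype n] [DecidableEq n] {M : Matrix n n ℝ}
    (hM : M.IsHermitian) (k : ℕ) :
    ∑ i, (hM.eigenvalues i) ^ (2 * k) = ∑ i, ∑ j, ((M ^ k) i j) ^ 2 := by
  have hMk : (M ^ k).IsHermitian := hM.pow k
  have h1 : ∑ i, ∑ j, ((M ^ k) i j) ^ 2 = (M ^ (2 * k)).trace := by
    rw [two_mul, pow_add, Matrix.trace]
    simp only [Matrix.diag, Matrix.mul_apply]
    rw [Finset.sum_comm]
    refine Finset.sum_congr rfl fun i _ => Finset.sum_congr rfl fun j _ => ?_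
    have : (M ^ k) j i = (M ^ k) i j := by
      conv_lhs => rw [← hMk]
      simp [Matrix.conjTranspose_apply]
    rw [this]; ring
  rw [h1]
  set U : Matrix n n ℝ := (hM.eigenvectorUnitary : Matrix n n ℝ) with hU
  have hUU : U * star U = 1 := (Unitary.mem_iff.mp hM.eigenvectorUnitary.2).2
  have hsUU : star U * U = 1 := (Unitary.mem_iff.mp hM.eigenvectorUnitary.2).1
  have hspec : M = U * Matrix.diagonal (RCLike.ofReal ∘ hM.eigenvalues) * star U :=
    hM.spectral_theorem
  have hconj : ∀ (D : Matrix n n ℝ) (m : ℕ), (U * D * star U) ^ m = U * D ^ m * star U := by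
    intro D m
    induction m with
    | zero => simp [hUU]
    | succ m ih =>
      have h2 : star U * (U * D * star U) = D * star U := by
        rw [← Matrix.mul_assoc, ← Matrix.mul_assoc, hsUU, Matrix.one_mul]
      rw [pow_succ, ih, Matrix.mul_assoc (U * D ^ m), h2, ← Matrix.mul_assoc,
        Matrix.mul_assoc U, ← pow_succ]
  have hpow : M ^ (2 * k) = U * (Matrix.diagonal (RCLike.ofReal ∘ hM.eigenvalues)) ^ (2 * k) * star U := by
    conv_lhs => rw [hspec]
    exact hconj _ _
  rw [hpow, Matrix.trace_mul_cycle, hsUU, Matrix.one_mul,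
    Matrix.diagonal_pow, Matrix.trace_diagonal]
  simp [RCLike.ofReal]

/-- For symmetric nonnegative adjacency matrices `A, A'` with positive row
sums and degree matrices `D, D'`, letting `S = D^{-1/2} A D^{-1/2}` and
`S' = (D')^{-1/2} A' (D')^{-1/2}` with eigenvalues `λ_i` and `λ'_i`, the attack objective
`ℓ₁(A') = ‖(S')^k − S^k‖_F²` is lower bounded by
`ℓ₂(λ') = ( √(∑ (λ'_i)^{2k}) − √(∑ λ_i^{2k}) )²` for every `k : ℕ`. -/
theorem stmt_6 (N : ℕ) (A A' : Matrix (Fin N) (Fin N) ℝ)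
    (hA : A.IsSymm) (hA' : A'.IsSymm)
    (hApos : ∀ i j, 0 ≤ A i j) (hA'pos : ∀ i j, 0 ≤ A' i j)
    (hdA : ∀ i, 0 < ∑ j, A i j) (hdA' : ∀ i, 0 < ∑ j, A' i j)
    (S S' : Matrix (Fin N) (Fin N) ℝ)
    (hSdef : S = Matrix.diagonal (fun i => (∑ j, A i j) ^ (-(1/2 : ℝ))) * A *
        Matrix.diagonal (fun i => (∑ j, A i j) ^ (-(1/2 : ℝ))))
    (hS'def : S' = Matrix.diagonal (fun i => (∑ j, A' i j) ^ (-(1/2 : ℝ))) * A' *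
        Matrix.diagonal (fun i => (∑ j, A' i j) ^ (-(1/2 : ℝ))))
    (hS : S.IsHermitian) (hS' : S'.IsHermitian) (k : ℕ) :
    (Real.sqrt (∑ i, (hS'.eigenvalues i) ^ (2 * k)) -
        Real.sqrt (∑ i, (hS.eigenvalues i) ^ (2 * k))) ^ 2
      ≤ ∑ i, ∑ j, ((S' ^ k - S ^ k) i j) ^ 2 := by
  set x : EuclideanSpace ℝ (Fin N × Fin N) := WithLp.toLp 2 (fun p : Fin N × Fin N => (S' ^ k) p.1 p.2) with hx
  set y : EuclideanSpace ℝ (Fin N × Fin N) := WithLp.toLp 2 (fun p : Fin N × Fin N => (S ^ k) p.1 p.2) with hy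
  have hnx : ‖x‖ = Real.sqrt (∑ i, (hS'.eigenvalues i) ^ (2 * k)) := by
    rw [EuclideanSpace.norm_eq, aux_trace hS' k]
    congr 1
    rw [Fintype.sum_prod_type]
    simp [Real.norm_eq_abs, sq_abs, hx]
  have hny : ‖y‖ = Real.sqrt (∑ i, (hS.eigenvalues i) ^ (2 * k)) := by
    rw [EuclideanSpace.norm_eq, aux_trace hS k]
    congr 1
    rw [Fintype.sum_prod_type]
    simp [Real.norm_eq_abs, sq_abs, hy]
  have key : |‖x‖ - ‖y‖| ≤ ‖x - y‖ := abs_norm_sub_norm_le x y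
  have h2 : ‖x - y‖ ^ 2 = ∑ i, ∑ j, ((S' ^ k - S ^ k) i j) ^ 2 := by
    rw [EuclideanSpace.norm_eq, Real.sq_sqrt (Finset.sum_nonneg fun p _ => by positivity)]
    rw [Fintype.sum_prod_type]
    refine Finset.sum_congr rfl fun i _ => Finset.sum_congr rfl fun j _ => ?_
    simp [Real.norm_eq_abs, sq_abs, hx, hy, Matrix.sub_apply]
  rw [← hnx, ← hny, ← h2, ← sq_abs (‖x‖ - ‖y‖)]
  exact pow_le_pow_left₀ (abs_nonneg _) key 2
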